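/- Outcome of the Maker-Breaker domination game on complete bipartite graphs: for n ≥ m ≥ 1, o(K_{m,n}) = D if (m = n = 1) or (m ≥ 2 and n ≥ 2), and o(K_{1,n}) = N for n ≥ 2 (the first player wins in both the D-game and S-game on a star). -/

import Mathlib

open SimpleGraph

namespace MBD

variable {V : Type*}

/-- Dominator's claimed set `D` is a dominating set of `G`. -/
def Dominates (G : SimpleGraph V) (D : Finset V) : Prop :=
  ∀ v : V, ∃ d ∈ D, d = v ∨ G.Adj d v

/-- Staller's claimed set `S` contains the whole closed neighborhood of some vertex. -/
def StallerWinSet (G : SimpleGraph V) (S : Finset V) : Prop :=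
  ∃ v : V, ∀ u : V, (u = v ∨ G.Adj u v) → u ∈ S

variable [DecidableEq V]

mutual
  /-- `DomD G k D S`: with Dominator having claimed `D`, Staller `S`, and Dominator to
  move, Dominator has a strategy winning the Maker-Breaker domination game on `G`
  using at most `k` further moves of his own. -/
  inductive DomD (G : SimpleGraph V) : ℕ → Finset V → Finset V → Prop
    | win {k : ℕ} {D S : Finset V} : Dominates G D → DomD G k D S
    | move {k : ℕ} {D S : Finset V} (v : V) : v ∉ D → v ∉ S →
        DomS G k (insert v D) S → DomD G (k + 1) D S
  /-- Like `DomD`, but it is Staller's turn to move. -/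
  inductive DomS (G : SimpleGraph V) : ℕ → Finset V → Finset V → Prop
    | win {k : ℕ} {D S : Finset V} : Dominates G D → DomS G k D S
    | move {k : ℕ} {D S : Finset V} : (∃ v : V, v ∉ D ∧ v ∉ S) →
        (∀ v : V, v ∉ D → v ∉ S → DomD G k D (insert v S)) → DomS G k D S
end

mutual
  /-- `StallD G k D S`: with Dominator having claimed `D`, Staller `S`, and Dominator to
  move, Staller has a strategy winning (claiming a whole closed neighborhood) within at
  most `k` further moves of her own. -/
  inductive StallD (G : SimpleGraph V) : ℕ → Finset V → Finset V → Prop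
    | win {k : ℕ} {D S : Finset V} : StallerWinSet G S → StallD G k D S
    | move {k : ℕ} {D S : Finset V} : (∃ v : V, v ∉ D ∧ v ∉ S) →
        (∀ v : V, v ∉ D → v ∉ S → StallS G k (insert v D) S) → StallD G k D S
  /-- Like `StallD`, but it is Staller's turn to move. -/
  inductive StallS (G : SimpleGraph V) : ℕ → Finset V → Finset V → Prop
    | win {k : ℕ} {D S : Finset V} : StallerWinSet G S → StallS G k D S
    | move {k : ℕ} {D S : Finset V} (v : V) : v ∉ D → v ∉ S →
        StallD G k D (insert v S) → StallS G (k + 1) D S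
end

/-- Dominator has a winning strategy in the D-game (Dominator starts). -/
def DominatorWinsD (G : SimpleGraph V) : Prop := ∃ k, DomD G k ∅ ∅

/-- Dominator has a winning strategy in the S-game (Staller starts). -/
def DominatorWinsS (G : SimpleGraph V) : Prop := ∃ k, DomS G k ∅ ∅

/-- Staller has a winning strategy in the D-game (Dominator starts). -/
def StallerWinsD (G : SimpleGraph V) : Prop := ∃ k, StallD G k ∅ ∅

/-- Staller has a winning strategy in the S-game (Staller starts). -/
def StallerWinsS (G : SimpleGraph V) : Prop := ∃ k, StallS G k ∅ ∅

/-- Outcome `𝒟`: Dominator wins both the D-game and the S-game. -/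
def outcomeD (G : SimpleGraph V) : Prop := DominatorWinsD G ∧ DominatorWinsS G

/-- Outcome `𝒮`: Staller wins both the D-game and the S-game. -/
def outcomeS (G : SimpleGraph V) : Prop := StallerWinsD G ∧ StallerWinsS G

/-- Outcome `𝒩`: the first player wins in both games. -/
def outcomeN (G : SimpleGraph V) : Prop := DominatorWinsD G ∧ StallerWinsS G

/-- `γ_MB(G)`: the minimum number of Dominator's moves needed to win the D-game,
`∞` if he has no winning strategy. -/
noncomputable def gMB (G : SimpleGraph V) : ℕ∞ :=
  sInf ((fun k : ℕ => (k : ℕ∞)) '' {k | DomD G k ∅ ∅})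

/-- `γ_MB'(G)`: the minimum number of Dominator's moves needed to win the S-game. -/
noncomputable def gMB' (G : SimpleGraph V) : ℕ∞ :=
  sInf ((fun k : ℕ => (k : ℕ∞)) '' {k | DomS G k ∅ ∅})

/-- `γ_SMB(G)`: the minimum number of Staller's moves needed to win the D-game. -/
noncomputable def gSMB (G : SimpleGraph V) : ℕ∞ :=
  sInf ((fun k : ℕ => (k : ℕ∞)) '' {k | StallD G k ∅ ∅})

/-- `γ_SMB'(G)`: the minimum number of Staller's moves needed to win the S-game. -/
noncomputable def gSMB' (G : SimpleGraph V) : ℕ∞ :=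
  sInf ((fun k : ℕ => (k : ℕ∞)) '' {k | StallS G k ∅ ∅})

end MBD

/-!
Dominator wins on `K_{V,W}` as soon as he owns a vertex on each side, or the centre of a star.
When both sides have at least two vertices, in the S-game he answers Staller's first move on
the same side and then takes a free vertex on the other side. On a star whoever claims the centre
first wins: Staller, holding it, completes the closed neighbourhood of a leaf Dominator has not
taken.
-/

open Sum

theorem Sum.exists_inl_ne {V W : Type*} [Nontrivial V] (v : V ⊕ W) : ∃ a, inl a ≠ v := by
  rcases v with a | b
  · obtain ⟨a', ha'⟩ := exists_ne a
    exact ⟨a', by simpa using ha'⟩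
  · exact ⟨Classical.arbitrary V, inl_ne_inr⟩

theorem Sum.exists_inr_ne {V W : Type*} [Nontrivial W] (v : V ⊕ W) : ∃ b, inr b ≠ v := by
  rcases v with a | b
  · exact ⟨Classical.arbitrary W, inr_ne_inl⟩
  · obtain ⟨b', hb'⟩ := exists_ne b
    exact ⟨b', by simpa using hb'⟩

namespace MBD

section General

variable {V : Type*} {G : SimpleGraph V}

theorem dominates_of_mem_of_forall_ne_adj {D : Finset V} {d : V} (hd : d ∈ D)
    (hadj : ∀ v, v ≠ d → G.Adj d v) : Dominates G D := fun v =>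
  ⟨d, hd, (eq_or_ne v d).imp Eq.symm (hadj v)⟩

variable [DecidableEq V]

theorem DomS.one_of_forall_exists_dominates {D S : Finset V} (hfree : ∃ v, v ∉ D ∧ v ∉ S)
    (hreply : ∀ v, v ∉ D → v ∉ S →
      ∃ w, w ∉ D ∧ w ∉ insert v S ∧ Dominates G (insert w D)) :
    DomS G 1 D S :=
  .move hfree fun v hvD hvS =>
    let ⟨w, hwD, hwS, hdom⟩ := hreply v hvD hvS
    .move w hwD hwS (.win hdom)

end General

section CompleteBipartite

variable {V W : Type*}

local notation "K" => completeBipartiteGraph V W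

theorem dominates_completeBipartiteGraph_of_inl_mem_of_inr_mem {D : Finset (V ⊕ W)} {a : V}
    {b : W} (ha : inl a ∈ D) (hb : inr b ∈ D) : Dominates K D := by
  rintro (x | y)
  · exact ⟨inr b, hb, .inr (by simp)⟩
  · exact ⟨inl a, ha, .inr (by simp)⟩

theorem dominates_completeBipartiteGraph_of_inl_mem [Subsingleton V] {D : Finset (V ⊕ W)}
    {a : V} (ha : inl a ∈ D) : Dominates K D :=
  dominates_of_mem_of_forall_ne_adj ha fun v hv => by
    rcases v with x | y
    · exact absurd (congrArg inl (Subsingleton.elim x a)) hv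
    · simp

theorem dominates_completeBipartiteGraph_of_inr_mem [Subsingleton W] {D : Finset (V ⊕ W)}
    {b : W} (hb : inr b ∈ D) : Dominates K D :=
  dominates_of_mem_of_forall_ne_adj hb fun v hv => by
    rcases v with x | y
    · simp
    · exact absurd (congrArg inr (Subsingleton.elim y b)) hv

theorem stallerWinSet_completeBipartiteGraph [Subsingleton V] {S : Finset (V ⊕ W)} {a : V}
    {b : W} (ha : inl a ∈ S) (hb : inr b ∈ S) : StallerWinSet K S := by
  refine ⟨inr b, ?_⟩
  rintro (x | y) (h | h)
  · simp at h
  · rwa [Subsingleton.elim x a]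
  · rwa [h]
  · simp at h

variable [DecidableEq V] [DecidableEq W]

theorem dominatorWinsD_completeBipartiteGraph_of_unique_left [Unique V] : DominatorWinsD K :=
  ⟨1, .move (inl default) (by simp) (by simp)
    (.win (dominates_completeBipartiteGraph_of_inl_mem (Finset.mem_singleton_self _)))⟩

theorem dominatorWinsD_completeBipartiteGraph [Nonempty V] [Nontrivial W] :
    DominatorWinsD K := by
  let a : V := Classical.arbitrary V
  refine ⟨2, .move (inl a) (by simp) (by simp) ?_⟩
  refine DomS.one_of_forall_exists_dominates ⟨inr (Classical.arbitrary W), by simp, by simp⟩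
    fun v _ _ => ?_
  obtain ⟨b, hb⟩ := Sum.exists_inr_ne (V := V) v
  exact ⟨inr b, by simp, by simp [hb],
    dominates_completeBipartiteGraph_of_inl_mem_of_inr_mem (a := a) (b := b) (by simp) (by simp)⟩

theorem dominatorWinsS_completeBipartiteGraph_of_unique [Unique V] [Unique W] :
    DominatorWinsS K := by
  refine ⟨1, DomS.one_of_forall_exists_dominates ⟨inl default, by simp, by simp⟩
    fun v _ _ => ?_⟩
  rcases v with a | b
  · exact ⟨inr default, by simp, by simp,
      dominates_completeBipartiteGraph_of_inr_mem (Finset.mem_singleton_self _)⟩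
  · exact ⟨inl default, by simp, by simp,
      dominates_completeBipartiteGraph_of_inl_mem (Finset.mem_singleton_self _)⟩

theorem dominatorWinsS_completeBipartiteGraph [Nontrivial V] [Nontrivial W] :
    DominatorWinsS K := by
  refine ⟨2, .move ⟨inl (Classical.arbitrary V), by simp, by simp⟩ fun v _ _ => ?_⟩
  rcases v with a₁ | b₁
  · obtain ⟨a, ha⟩ := exists_ne a₁
    refine .move (inl a) (by simp) (by simpa using ha) ?_
    refine DomS.one_of_forall_exists_dominates ⟨inr (Classical.arbitrary W), by simp, by simp⟩
      fun v _ _ => ?_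
    obtain ⟨b, hb⟩ := Sum.exists_inr_ne (V := V) v
    exact ⟨inr b, by simp, by simp [hb],
      dominates_completeBipartiteGraph_of_inl_mem_of_inr_mem (a := a) (b := b) (by simp)
        (by simp)⟩
  · obtain ⟨b, hb⟩ := exists_ne b₁
    refine .move (inr b) (by simp) (by simpa using hb) ?_
    refine DomS.one_of_forall_exists_dominates ⟨inl (Classical.arbitrary V), by simp, by simp⟩
      fun v _ _ => ?_
    obtain ⟨a, ha⟩ := Sum.exists_inl_ne (W := W) v
    exact ⟨inl a, by simp, by simp [ha],
      dominates_completeBipartiteGraph_of_inl_mem_of_inr_mem (a := a) (b := b) (by simp)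
        (by simp)⟩

theorem stallerWinsS_completeBipartiteGraph_of_unique_left [Unique V] [Nontrivial W] :
    StallerWinsS K := by
  refine ⟨2, .move (inl default) (by simp) (by simp) ?_⟩
  refine .move ⟨inr (Classical.arbitrary W), by simp, by simp⟩ fun v _ _ => ?_
  obtain ⟨b, hb⟩ := Sum.exists_inr_ne (V := V) v
  exact .move (inr b) (by simpa using hb) (by simp)
    (.win (stallerWinSet_completeBipartiteGraph (a := default) (b := b) (by simp) (by simp)))

theorem outcomeD_completeBipartiteGraph_of_unique [Unique V] [Unique W] : outcomeD K :=
  ⟨dominatorWinsD_completeBipartiteGraph_of_unique_left,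
    dominatorWinsS_completeBipartiteGraph_of_unique⟩

theorem outcomeD_completeBipartiteGraph [Nontrivial V] [Nontrivial W] : outcomeD K :=
  ⟨dominatorWinsD_completeBipartiteGraph, dominatorWinsS_completeBipartiteGraph⟩

theorem outcomeN_completeBipartiteGraph_of_unique_left [Unique V] [Nontrivial W] :
    outcomeN K :=
  ⟨dominatorWinsD_completeBipartiteGraph_of_unique_left,
    stallerWinsS_completeBipartiteGraph_of_unique_left⟩

end CompleteBipartite

end MBD

/-- Outcome on complete bipartite graphs, `n ≥ m ≥ 1`: `o(K_{m,n}) = 𝒟` if `m = n = 1`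
or `m, n ≥ 2`, and `o(K_{1,n}) = 𝒩` if `n ≥ 2`. -/
theorem stmt_17 (m n : ℕ) (hm : 1 ≤ m) (hmn : m ≤ n) :
    ((m = 1 ∧ n = 1) ∨ (2 ≤ m ∧ 2 ≤ n) →
      MBD.outcomeD (completeBipartiteGraph (Fin m) (Fin n))) ∧
    (m = 1 ∧ 2 ≤ n → MBD.outcomeN (completeBipartiteGraph (Fin m) (Fin n))) := by
  refine ⟨?_, ?_⟩
  · rintro (⟨rfl, rfl⟩ | ⟨hm₂, hn₂⟩)
    · exact MBD.outcomeD_completeBipartiteGraph_of_unique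
    · have := Fin.nontrivial_iff_two_le.mpr hm₂
      have := Fin.nontrivial_iff_two_le.mpr hn₂
      exact MBD.outcomeD_completeBipartiteGraph
  · rintro ⟨rfl, hn⟩
    have := Fin.nontrivial_iff_two_le.mpr hn
    exact MBD.outcomeN_completeBipartiteGraph_of_unique_left
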